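/- With the setup of the context (commutative ring R, elements D_S for all S ⊆ {1,…,n} with |S| ≥ 2 satisfying relation (1), polynomials c_{ij} ∈ R[t] satisfying relation (3)): for all subsets S, S' ⊆ {1,…,n} with |S| ≥ 2, |S'| ≥ 2 and |S ∩ S'| = 1, and every enumeration i₁, …, i_k of the elements of S', one has D_S · ∏_{m=1}^{k−1} c_{i_m i_{m+1}}(Σ_{V ⊇ S ∪ S'} D_V) = 0 in R, where the sum Σ_{V ⊇ S ∪ S'} D_V runs over all subsets V ⊆ {1,…,n} with |V| ≥ 2 containing S ∪ S'. -/

import Mathlib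

/-!
Write `x = Σ_{V ⊇ S ∪ S'} D_V` and let `a, b` be consecutive in the enumeration of `S'`.
By relation (3), `c_{ab}(x)` is divisible by `x - Σ_{V ∋ a,b} D_V`, which is minus the sum of
the `D_V` over the sets `V ∋ a, b` not containing `S ∪ S'`. Expanding the product of these sums,
every term is `D_S · ∏_m D_{V_m}` with `V_m` containing the `m`-th consecutive pair. If two of
`S, V_1, …, V_{k-1}` overlap, the term vanishes by relation (1). Otherwise the family is laminar;
as consecutive `V_m` meet, one of them contains all the others, hence contains `S'`. It meets `S`,
and cannot lie inside `S` because `|S ∩ S'| = 1 < |S'|`, so it contains `S ∪ S'`: a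
contradiction.
-/

open Finset

theorem List.prod_map_eq_zero_of_not_pairwise {ι M : Type*} [CommMonoidWithZero M]
    {f : ι → M} {r : ι → ι → Prop} {L : List ι}
    (hf : ∀ a ∈ L, ∀ b ∈ L, ¬r a b → f a * f b = 0) (hL : ¬L.Pairwise r) :
    (L.map f).prod = 0 := by
  induction L with
  | nil => exact absurd List.Pairwise.nil hL
  | cons a L ih =>
    rw [List.pairwise_cons, not_and_or, not_forall] at hL
    rw [List.map_cons, List.prod_cons]
    rcases hL with ⟨b, hb⟩ | hL
    · rw [Classical.not_imp] at hb
      obtain ⟨g, hg⟩ := List.dvd_prod (List.mem_map_of_mem (f := f) hb.1)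
      rw [hg, ← mul_assoc, hf a (by simp) b (by simp [hb.1]) hb.2, zero_mul]
    · rw [ih (fun a ha b hb => hf a (by simp [ha]) b (by simp [hb])) hL, mul_zero]

theorem List.prod_map_zip_tail {ι M : Type*} [CommMonoid M] (f : ι → ι → M) (l : List ι) :
    ((l.zip l.tail).map fun p => f p.1 p.2).prod =
      ∏ m : Fin (l.length - 1), f l[(m : ℕ)] l[(m : ℕ) + 1] := by
  rw [← List.prod_ofFn]
  congr 1
  apply List.ext_getElem
  · simp
  · intro i _ _
    simp

theorem Polynomial.sub_dvd_eval_of_eval_eq_zero {R : Type*} [CommRing R] {p : Polynomial R}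
    {y : R} (x : R) (hy : p.eval y = 0) : x - y ∣ p.eval x := by
  simpa [hy] using sub_dvd_eval_sub x y p

section Laminar

variable {α : Type*} [DecidableEq α]

def Overlap (S T : Finset α) : Prop := (S ∩ T).Nonempty ∧ ¬S ⊆ T ∧ ¬T ⊆ S

theorem overlap_iff_inter_ne {S T : Finset α} :
    Overlap S T ↔ S ∩ T ≠ ∅ ∧ S ∩ T ≠ S ∧ S ∩ T ≠ T := by
  simp only [Overlap, nonempty_iff_ne_empty, ne_eq, inter_eq_left, inter_eq_right]

theorem List.exists_forall_subset_of_isChain_of_pairwise {M : List (Finset α)} (hM : M ≠ [])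
    (hchain : M.IsChain fun A B => (A ∩ B).Nonempty)
    (hlam : M.Pairwise fun A B => ¬Overlap A B) : ∃ U ∈ M, ∀ A ∈ M, A ⊆ U := by
  induction M with
  | nil => exact absurd rfl hM
  | cons B M ih =>
    rcases M with _ | ⟨B', M⟩
    · exact ⟨B, by simp, by simp⟩
    obtain ⟨hBB', hchain⟩ := List.isChain_cons_cons.1 hchain
    obtain ⟨hB, hlam⟩ := List.pairwise_cons.1 hlam
    obtain ⟨U, hU, hUall⟩ := ih (by simp) hchain hlam
    have hBU : (B ∩ U).Nonempty := hBB'.mono (inter_subset_inter_left (hUall B' (by simp)))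
    by_cases hsub : B ⊆ U
    · exact ⟨U, by simp [hU], by simpa [hsub] using hUall⟩
    by_cases hsup : U ⊆ B
    · exact ⟨B, by simp, by simpa using fun A hA => (hUall A hA).trans hsup⟩
    exact absurd ⟨hBU, hsub, hsup⟩ (hB U hU)

theorem List.exists_toFinset_subset_of_forall_mem {l : List α}
    (hl : 2 ≤ l.length) {q : Fin (l.length - 1) → Finset α}
    (hq : ∀ m : Fin (l.length - 1), l[(m : ℕ)] ∈ q m ∧ l[(m : ℕ) + 1] ∈ q m)
    (hlam : (List.ofFn q).Pairwise fun A B => ¬Overlap A B) :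
    ∃ m, l.toFinset ⊆ q m := by
  obtain ⟨U, hU, hUall⟩ := List.exists_forall_subset_of_isChain_of_pairwise
    (by simpa using (by omega : l.length - 1 ≠ 0))
    (List.isChain_ofFn.2 fun i hi =>
      ⟨l[i + 1], mem_inter.2 ⟨(hq ⟨i, _⟩).2, (hq ⟨i + 1, hi⟩).1⟩⟩)
    hlam
  obtain ⟨m, rfl⟩ := List.mem_ofFn.1 hU
  refine ⟨m, fun x hx => ?_⟩
  obtain ⟨t, ht, rfl⟩ := List.mem_iff_getElem.1 (List.mem_toFinset.1 hx)
  cases t with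
  | zero => exact hUall _ (List.mem_ofFn.2 ⟨⟨0, by omega⟩, rfl⟩) (hq ⟨0, by omega⟩).1
  | succ s => exact hUall _ (List.mem_ofFn.2 ⟨⟨s, by omega⟩, rfl⟩) (hq ⟨s, by omega⟩).2

theorem union_subset_of_not_overlap {S S' U : Finset α} (hS' : 2 ≤ #S') (hint : #(S ∩ S') = 1)
    (hU : S' ⊆ U) (h : ¬Overlap S U) : S ∪ S' ⊆ U := by
  have hmeet : (S ∩ U).Nonempty :=
    (card_pos.1 (by omega : 0 < #(S ∩ S'))).mono (inter_subset_inter_left hU)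
  by_contra hsub
  have hUS : U ⊆ S :=
    by_contra fun hUS => h ⟨hmeet, fun hSU => hsub (union_subset hSU hU), hUS⟩
  rw [inter_eq_right.2 (hU.trans hUS)] at hint
  omega

variable {R : Type*} {D : Finset α → R} {S S' : Finset α} {l : List α}

theorem mul_prod_eq_zero_of_forall_mem [CommMonoidWithZero R]
    (hD : ∀ S T, 2 ≤ #S → 2 ≤ #T → Overlap S T → D S * D T = 0)
    (hS : 2 ≤ #S) (hS' : 2 ≤ #S') (hint : #(S ∩ S') = 1) (hl : l.toFinset = S')
    {q : Fin (l.length - 1) → Finset α}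
    (hq : ∀ m : Fin (l.length - 1),
      2 ≤ #(q m) ∧ l[(m : ℕ)] ∈ q m ∧ l[(m : ℕ) + 1] ∈ q m ∧ ¬S ∪ S' ⊆ q m) :
    D S * ∏ m, D (q m) = 0 := by
  have hlen : 2 ≤ l.length := hS'.trans (hl ▸ List.toFinset_card_le l)
  have hcard : ∀ V ∈ S :: List.ofFn q, 2 ≤ #V := by
    simpa [List.mem_ofFn] using ⟨hS, fun m => (hq m).1⟩
  rw [show D S * ∏ m, D (q m) = ((S :: List.ofFn q).map D).prod by
    simp [List.map_ofFn, List.prod_ofFn, Function.comp_def]]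
  by_contra hne
  have hlam : (S :: List.ofFn q).Pairwise fun A B => ¬Overlap A B := by
    by_contra hL
    exact hne (List.prod_map_eq_zero_of_not_pairwise
      (fun A hA B hB hAB => hD A B (hcard A hA) (hcard B hB) (not_not.1 hAB)) hL)
  obtain ⟨hSq, hlam⟩ := List.pairwise_cons.1 hlam
  obtain ⟨m, hm⟩ := List.exists_toFinset_subset_of_forall_mem hlen
    (fun m => ⟨(hq m).2.1, (hq m).2.2.1⟩) hlam
  exact (hq m).2.2.2 <|
    union_subset_of_not_overlap hS' hint (hl ▸ hm) (hSq _ (List.mem_ofFn.2 ⟨m, rfl⟩))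

theorem mul_prod_sum_eq_zero [Fintype α] [CommSemiring R]
    (hD : ∀ S T, 2 ≤ #S → 2 ≤ #T → Overlap S T → D S * D T = 0)
    (hS : 2 ≤ #S) (hS' : 2 ≤ #S') (hint : #(S ∩ S') = 1) (hl : l.toFinset = S') :
    D S * ∏ m : Fin (l.length - 1),
      ∑ V ∈ univ.filter (fun V : Finset α =>
        2 ≤ #V ∧ l[(m : ℕ)] ∈ V ∧ l[(m : ℕ) + 1] ∈ V ∧ ¬S ∪ S' ⊆ V), D V = 0 := by
  rw [prod_univ_sum, mul_sum]
  exact sum_eq_zero fun q hq => mul_prod_eq_zero_of_forall_mem hD hS hS' hint hl fun m => by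
    simpa using Fintype.mem_piFinset.1 hq m

end Laminar

theorem sum_filter_superset_sub_sum_filter_mem {α M : Type*} [Fintype α] [DecidableEq α]
    [AddCommGroup M] (D : Finset α → M) {T : Finset α} {a b : α} (ha : a ∈ T)
    (hb : b ∈ T) :
    ∑ V ∈ univ.filter (fun V : Finset α => 2 ≤ #V ∧ T ⊆ V), D V -
      ∑ V ∈ univ.filter (fun V : Finset α => 2 ≤ #V ∧ a ∈ V ∧ b ∈ V), D V =
      -∑ V ∈ univ.filter (fun V : Finset α => 2 ≤ #V ∧ a ∈ V ∧ b ∈ V ∧ ¬T ⊆ V),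
        D V := by
  rw [← sum_filter_add_sum_filter_not
    (univ.filter fun V : Finset α => 2 ≤ #V ∧ a ∈ V ∧ b ∈ V) (T ⊆ ·), filter_filter,
    filter_filter]
  have hsup : univ.filter (fun V : Finset α => (2 ≤ #V ∧ a ∈ V ∧ b ∈ V) ∧ T ⊆ V) =
      univ.filter (fun V : Finset α => 2 ≤ #V ∧ T ⊆ V) :=
    filter_congr fun V _ =>
      ⟨fun h => ⟨h.1.1, h.2⟩, fun h => ⟨⟨h.1, h.2 ha, h.2 hb⟩, h.2⟩⟩
  rw [hsup]
  simp only [and_assoc]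
  abel

theorem relation_four_general (n : ℕ) (R : Type*) [CommRing R]
    (D : Finset (Fin n) → R) (c : Fin n → Fin n → Polynomial R)
    (h1 : ∀ S T : Finset (Fin n), 2 ≤ S.card → 2 ≤ T.card →
      S ∩ T ≠ ∅ → S ∩ T ≠ S → S ∩ T ≠ T → D S * D T = 0)
    (h3 : ∀ i j : Fin n, i ≠ j →
      (c i j).eval (∑ V ∈ univ.filter
        (fun V : Finset (Fin n) => 2 ≤ V.card ∧ i ∈ V ∧ j ∈ V), D V) = 0)
    (S S' : Finset (Fin n)) (hS : 2 ≤ S.card) (hS' : 2 ≤ S'.card)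
    (hint : (S ∩ S').card = 1)
    (l : List (Fin n)) (hnd : l.Nodup) (hl : l.toFinset = S') :
    D S * ((l.zip l.tail).map (fun p => (c p.1 p.2).eval
      (∑ V ∈ univ.filter
        (fun V : Finset (Fin n) => 2 ≤ V.card ∧ S ∪ S' ⊆ V), D V))).prod = 0 := by
  have hD (T U : Finset (Fin n)) (hT : 2 ≤ #T) (hU : 2 ≤ #U) (h : Overlap T U) :
      D T * D U = 0 :=
    let ⟨hmeet, hTU, hUT⟩ := overlap_iff_inter_ne.1 h
    h1 T U hT hU hmeet hTU hUT
  have hmem (t : ℕ) (ht : t < l.length) : l[t] ∈ S ∪ S' :=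
    mem_union_right _ (hl ▸ List.mem_toFinset.2 (List.getElem_mem ht))
  rw [List.prod_map_zip_tail (fun a b => (c a b).eval _), ← zero_dvd_iff,
    ← mul_prod_sum_eq_zero hD hS hS' hint hl]
  refine mul_dvd_mul_left _ (prod_dvd_prod_of_dvd _ _ fun m _ => ?_)
  have hne : l[(m : ℕ)] ≠ l[(m : ℕ) + 1] := fun h => by
    have := hnd.getElem_inj_iff.1 h
    omega
  rw [← neg_dvd, ← sum_filter_superset_sub_sum_filter_mem D (hmem _ _) (hmem _ _)]
  exact Polynomial.sub_dvd_eval_of_eval_eq_zero _ (h3 _ _ hne)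

/-- Relations (1) and (3) of Fulton–MacPherson's presentation imply relation (4):
`D_S · c_{S'}(Σ_{S ∪ S' ⊆ V} D_V) = 0` whenever `|S| ≥ 2`, `|S'| ≥ 2` and
`|S ∩ S'| = 1`, for every enumeration `i₁, …, i_k` of the elements of `S'`, where
`c_{S'}(t) = ∏_{m=1}^{k−1} c_{i_m i_{m+1}}(t)`. -/
theorem relation_four (n : ℕ) (hn : 2 ≤ n) (R : Type*) [CommRing R]
    (D : Finset (Fin n) → R) (c : Fin n → Fin n → Polynomial R)
    (hsym : ∀ i j : Fin n, i ≠ j → c i j = c j i)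
    (h1 : ∀ S T : Finset (Fin n), 2 ≤ S.card → 2 ≤ T.card →
      S ∩ T ≠ ∅ → S ∩ T ≠ S → S ∩ T ≠ T → D S * D T = 0)
    (h3 : ∀ i j : Fin n, i ≠ j →
      (c i j).eval (∑ V ∈ univ.filter
        (fun V : Finset (Fin n) => 2 ≤ V.card ∧ i ∈ V ∧ j ∈ V), D V) = 0)
    (S S' : Finset (Fin n)) (hS : 2 ≤ S.card) (hS' : 2 ≤ S'.card)
    (hint : (S ∩ S').card = 1)
    (l : List (Fin n)) (hnd : l.Nodup) (hl : l.toFinset = S') :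
    D S * ((l.zip l.tail).map (fun p => (c p.1 p.2).eval
      (∑ V ∈ univ.filter
        (fun V : Finset (Fin n) => 2 ≤ V.card ∧ S ∪ S' ⊆ V), D V))).prod = 0 :=
  relation_four_general n R D c h1 h3 S S' hS hS' hint l hnd hl
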